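/- Let A be a finite-length abelian category, S a totally ordered set indexing the simple objects, and s ∈ S. If φ: M → L_s and φ': M' → L_s are both standard covers of the simple object L_s (i.e., each is a surjection whose kernel has all simple subquotients of the form L_t with t < s, and which satisfies Hom(M, L_t) = Ext^1(M, L_t) = 0 for all t < s), then there is a unique isomorphism θ: M → M' with φ' ∘ θ = φ. -/

import Mathlib

open CategoryTheory CategoryTheory.Limits

universe w v u

/-- `T` is a subquotient of `Y`: there is an object `Z`, a monomorphism `Z ⟶ Y`
and an epimorphism `Z ⟶ T`. -/
def IsSubquotient {A : Type u} [Category.{v} A] [Abelian A] (T Y : A) : Prop :=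
  ∃ (Z : A) (i : Z ⟶ Y) (p : Z ⟶ T), Mono i ∧ Epi p

/-- An object has finite length if its subobject lattice is both artinian and noetherian. -/
def HasFiniteLength {A : Type u} [Category.{v} A] [Abelian A] (X : A) : Prop :=
  WellFoundedGT (Subobject X) ∧ WellFoundedLT (Subobject X)

/-- `φ : M ⟶ L s` is a standard cover of the simple object `L s`: it is an epimorphism,
every simple subquotient of its kernel is isomorphic to some `L t` with `t < s`, and
`Hom(M, L t) = Ext¹(M, L t) = 0` for all `t < s`. -/
def IsStandardCover {A : Type u} [Category.{v} A] [Abelian A] [HasExt.{w} A]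
    {S : Type*} [LinearOrder S] (L : S → A) (s : S) (M : A) (φ : M ⟶ L s) : Prop :=
  Epi φ ∧
  (∀ T : A, Simple T → IsSubquotient T (kernel φ) →
    ∃ t, t < s ∧ Nonempty (T ≅ L t)) ∧
  (∀ t, t < s → (∀ f : M ⟶ L t, f = 0) ∧ Subsingleton (Abelian.Ext M (L t) 1))

/-!
`Ext^n(M, -) = 0` is closed under extensions, so for `n = 0, 1` it passes from the
composition factors `L t`, `t < s`, of `ker φ'` to `ker φ'` itself. The long exact
`Ext(M, -)` sequence of `0 → ker φ' → M' → L s → 0` then says that `φ` lifts through `φ'`,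
and uniquely. Lifting both ways gives maps `M ⇄ M'` whose composites lift `φ` through `φ`
(resp. `φ'` through `φ'`), so by uniqueness they are the identities.
-/

namespace CategoryTheory

open Abelian

variable {A : Type u} [Category.{v} A] [Abelian A]

lemma Simple.of_op {X : A} [Simple (Opposite.op X)] : Simple X :=
  simple_of_cosimple X fun f _ => by
    rw [← isIso_op_iff, Simple.mono_isIso_iff_nonzero f.op, Ne, Ne, ← op_zero,
      Quiver.Hom.op_inj.eq_iff]

lemma simple_cokernel_of_isCoatom_mk {Z Y : A} (f : Z ⟶ Y) [Mono f]
    (hf : IsCoatom (Subobject.mk f)) : Simple (cokernel f) := by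
  have hatom : IsAtom (Subobject.mk (cokernel.π f).op) :=
    isCoatom_dual_iff_isAtom.1 (((subobjectIsoSubobjectOp Y).isCoatom_iff _).2 hf)
  have := (subobject_simple_iff_isAtom _).2 hatom
  have : Simple (Opposite.op (cokernel f)) :=
    Simple.of_iso (Subobject.underlyingIso (cokernel.π f).op).symm
  exact Simple.of_op

lemma Subobject.simple_cokernel_ofLE_of_covBy {X : A} {N' N : Subobject X} (h : N' ⋖ N) :
    Simple (cokernel (Subobject.ofLE N' N h.le)) :=
  simple_cokernel_of_isCoatom_mk _ <|
    ((Subobject.subobjectOrderIso N).symm.isCoatom_iff ⟨N', h.le⟩).2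
      (Set.Iic.isCoatom_iff.2 h)

lemma ShortComplex.cokernelSequence_shortExact {X Y : A} (f : X ⟶ Y) [Mono f] :
    (cokernelSequence f).ShortExact where
  mono_f := inferInstanceAs (Mono f)
  exact := cokernelSequence_exact f

lemma ShortComplex.kernelSequence_shortExact {X Y : A} (f : X ⟶ Y) [Epi f] :
    (kernelSequence f).ShortExact where
  epi_g := inferInstanceAs (Epi f)
  exact := kernelSequence_exact f

lemma ObjectProperty.prop_of_forall_simple_isSubquotient (P : ObjectProperty A)
    [P.IsClosedUnderIsomorphisms] [P.IsClosedUnderExtensions] [P.ContainsZero]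
    {X : A} [IsArtinianObject X] [IsNoetherianObject X]
    (hP : ∀ T : A, Simple T → IsSubquotient T X → P T) : P X := by
  suffices ∀ N : Subobject X, P N from P.prop_of_iso (asIso (⊤ : Subobject X).arrow) (this ⊤)
  intro N
  induction N using WellFoundedLT.induction with
  | _ N ih =>
    rcases eq_or_ne N ⊥ with rfl | hN
    · exact P.prop_of_isZero (Subobject.botCoeIsoZero.isZero_iff.2 (isZero_zero A))
    obtain ⟨N', -, hN'⟩ := exists_le_covBy_of_lt (bot_lt_iff_ne_bot.2 hN)
    exact P.prop_X₂_of_shortExact (ShortComplex.cokernelSequence_shortExact (N'.ofLE N hN'.le))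
      (ih N' hN'.lt) (hP (cokernel (N'.ofLE N hN'.le)) (Subobject.simple_cokernel_ofLE_of_covBy hN')
        ⟨N, N.arrow, cokernel.π _, inferInstance, inferInstance⟩)

section Ext

open ZeroObject

variable [HasExt.{w} A]

def extVanishing (M : A) (n : ℕ) : ObjectProperty A :=
  fun X => Subsingleton (Ext.{w} M X n)

variable (M : A) (n : ℕ)

instance : (extVanishing.{w} M n).IsClosedUnderIsomorphisms where
  of_iso e hX :=
    have : Subsingleton _ := hX
    Function.Surjective.subsingleton (f := fun x => x.comp (Ext.mk₀ e.hom) (add_zero n))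
      fun a => ⟨a.comp (Ext.mk₀ e.inv) (add_zero n), by simp⟩

instance : (extVanishing.{w} M n).ContainsZero where
  exists_zero := ⟨0, isZero_zero A, ⟨fun a b => by
    rw [← Ext.comp_mk₀_id a, ← Ext.comp_mk₀_id b, (isZero_zero A).eq_of_src (𝟙 0) 0]
    simp⟩⟩

instance : (extVanishing.{w} M n).IsClosedUnderExtensions where
  prop_X₂_of_shortExact hS h₁ h₃ := ⟨fun a b => by
    have : Subsingleton (Ext M _ n) := h₁
    have : Subsingleton (Ext M _ n) := h₃
    obtain ⟨c, hc⟩ := Ext.covariant_sequence_exact₂ M hS (a - b) (Subsingleton.elim _ _)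
    rw [← sub_eq_zero, ← hc, Subsingleton.elim c 0, Ext.zero_comp]⟩

lemma ShortComplex.ShortExact.exists_comp_g_eq {S : ShortComplex A} (hS : S.ShortExact) {X : A}
    (hX : extVanishing.{w} X 1 S.X₁) (f : X ⟶ S.X₃) : ∃ g : X ⟶ S.X₂, g ≫ S.g = f := by
  have : Subsingleton _ := hX
  obtain ⟨x, hx⟩ := Ext.covariant_sequence_exact₃ X hS (Ext.mk₀ f) (zero_add 1)
    (Subsingleton.elim _ _)
  obtain ⟨g, rfl⟩ := (Ext.mk₀_bijective X S.X₂).surjective x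
  exact ⟨g, (Ext.mk₀_bijective X S.X₃).injective (by rwa [← Ext.mk₀_comp_mk₀])⟩

lemma ShortComplex.ShortExact.hom_ext_of_extVanishing {S : ShortComplex A} (hS : S.ShortExact)
    {X : A} (hX : extVanishing.{w} X 0 S.X₁) {g g' : X ⟶ S.X₂} (h : g ≫ S.g = g' ≫ S.g) :
    g = g' := by
  have : Subsingleton (X ⟶ S.X₁) := @Equiv.subsingleton _ _ Ext.homEquiv₀.symm hX
  have := hS.mono_f
  have hk : (g - g') ≫ S.g = 0 := by rw [Preadditive.sub_comp, h, sub_self]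
  rw [← sub_eq_zero, ← hS.exact.lift_f _ hk, Subsingleton.elim (hS.exact.lift _ hk) 0, zero_comp]

end Ext

section StandardCover

variable [HasExt.{w} A] {S : Type*} [LinearOrder S] {L : S → A} {s : S}
  {M M' : A} {φ' : M' ⟶ L s}

lemma IsStandardCover.extVanishing_of_lt {φ : M ⟶ L s} (h : IsStandardCover.{w} L s M φ)
    {n : ℕ} (hn : n ≤ 1) :
    ∀ t < s, extVanishing.{w} M n (L t) := by
  intro t ht
  obtain rfl | rfl := Nat.le_one_iff_eq_zero_or_eq_one.1 hn
  · have : Subsingleton (M ⟶ L t) :=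
      ⟨fun f g => ((h.2.2 t ht).1 f).trans ((h.2.2 t ht).1 g).symm⟩
    exact Ext.homEquiv₀.subsingleton
  · exact (h.2.2 t ht).2

lemma IsStandardCover.extVanishing_kernel (h' : IsStandardCover.{w} L s M' φ')
    (hfl : HasFiniteLength (kernel φ')) {n : ℕ}
    (hM : ∀ t < s, extVanishing.{w} M n (L t)) : extVanishing.{w} M n (kernel φ') := by
  have : IsNoetherianObject (kernel φ') := ⟨hfl.1⟩
  have : IsArtinianObject (kernel φ') := ⟨hfl.2⟩
  refine (extVanishing.{w} M n).prop_of_forall_simple_isSubquotient fun T hT hTK => ?_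
  obtain ⟨t, ht, ⟨e⟩⟩ := h'.2.1 T hT hTK
  exact (extVanishing.{w} M n).prop_of_iso e.symm (hM t ht)

lemma IsStandardCover.exists_comp_eq (h' : IsStandardCover.{w} L s M' φ')
    (hfl : HasFiniteLength (kernel φ')) (φ : M ⟶ L s)
    (hM : ∀ t < s, extVanishing.{w} M 1 (L t)) :
    ∃ θ : M ⟶ M', θ ≫ φ' = φ :=
  have := h'.1
  (ShortComplex.kernelSequence_shortExact φ').exists_comp_g_eq (h'.extVanishing_kernel hfl hM) φ

lemma IsStandardCover.hom_ext (h' : IsStandardCover.{w} L s M' φ')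
    (hfl : HasFiniteLength (kernel φ')) (hM : ∀ t < s, extVanishing.{w} M 0 (L t))
    {θ θ' : M ⟶ M'} (hθ : θ ≫ φ' = θ' ≫ φ') : θ = θ' :=
  have := h'.1
  (ShortComplex.kernelSequence_shortExact φ').hom_ext_of_extVanishing
    (h'.extVanishing_kernel hfl hM) hθ

end StandardCover

end CategoryTheory

theorem standardCover_unique_general
    {A : Type u} [Category.{v} A] [Abelian A] [HasExt.{w} A]
    (hfl : ∀ X : A, HasFiniteLength X)
    {S : Type*} [LinearOrder S] (L : S → A)
    (s : S) (M M' : A) (φ : M ⟶ L s) (φ' : M' ⟶ L s)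
    (h : IsStandardCover L s M φ) (h' : IsStandardCover L s M' φ') :
    ∃! θ : M ≅ M', θ.hom ≫ φ' = φ := by
  obtain ⟨θ, hθ⟩ := h'.exists_comp_eq (hfl _) φ (h.extVanishing_of_lt le_rfl)
  obtain ⟨θ', hθ'⟩ := h.exists_comp_eq (hfl _) φ' (h'.extVanishing_of_lt le_rfl)
  refine ⟨⟨θ, θ', ?_, ?_⟩, hθ, fun ψ hψ => Iso.ext ?_⟩
  · refine h.hom_ext (hfl _) (h.extVanishing_of_lt zero_le_one) ?_
    rw [Category.assoc, hθ', hθ, Category.id_comp]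
  · refine h'.hom_ext (hfl _) (h'.extVanishing_of_lt zero_le_one) ?_
    rw [Category.assoc, hθ, hθ', Category.id_comp]
  · exact h'.hom_ext (hfl _) (h.extVanishing_of_lt zero_le_one) (hψ.trans hθ.symm)

/-- any two standard covers of the simple object `L s` are related by a
unique isomorphism compatible with the covering maps. -/
theorem standardCover_unique
    {A : Type u} [Category.{v} A] [Abelian A] [HasExt.{w} A]
    (hfl : ∀ X : A, HasFiniteLength X)
    {S : Type*} [LinearOrder S] (L : S → A) (hL : ∀ t, Simple (L t))
    (s : S) (M M' : A) (φ : M ⟶ L s) (φ' : M' ⟶ L s)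
    (h : IsStandardCover L s M φ) (h' : IsStandardCover L s M' φ') :
    ∃! θ : M ≅ M', θ.hom ≫ φ' = φ :=
  standardCover_unique_general hfl L s M M' φ φ' h h'
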